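/- The three-stage explicit Runge–Kutta tableau with a₂₁ = −√3/4, a₃₂ = 3/4 (all other a_{ij} = 0), weights b = (11/27, 0, 16/27), satisfies the fourth-order conditions restricted to trees with no •[•] descendant: Σbᵢ = 1, Σbᵢcᵢ² = 1/3, Σbᵢcᵢ³ = 1/4, and Σ_{i,j} bᵢa_{ij}cⱼ² = 1/12, where c = (0, −√3/4, 3/4). -/

import Mathlib

/-- Rooted trees (branches unordered; the Runge–Kutta elementary weights below are
invariant under reordering of branches). -/
inductive PT : Type
  | node : List PT → PT

namespace PT

abbrev leaf : PT := PT.node []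

mutual
/-- number of nodes `|τ|` -/
def size : PT → ℕ
  | .node l => 1 + sizeL l
def sizeL : List PT → ℕ
  | [] => 0
  | a :: as => size a + sizeL as
end

mutual
/-- the tree factorial `γ` -/
def gam : PT → ℕ
  | .node l => size (.node l) * gamL l
def gamL : List PT → ℕ
  | [] => 1
  | a :: as => gam a * gamL as
end

/-- `τ` has a descendant (subtree) of the form `•[•]`, i.e. a node with exactly
one child which is a leaf. -/
inductive HasCherry : PT → Prop
  | here : HasCherry (.node [.node []])
  | child {l : List PT} {a : PT} : a ∈ l → HasCherry a → HasCherry (.node l)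

mutual
/-- internal Runge–Kutta elementary weights `Φᵢ`:
`Φᵢ(•) = cᵢ`, `Φᵢ((σ₁,…,σₘ)_•) = Σⱼ a_{ij} Φⱼ(σ₁)⋯Φⱼ(σₘ)` -/
def phiI {s : ℕ} (A : Fin s → Fin s → ℝ) : PT → Fin s → ℝ
  | .node l, i => ∑ j, A i j * phiL A l j
def phiL {s : ℕ} (A : Fin s → Fin s → ℝ) : List PT → Fin s → ℝ
  | [], _ => 1
  | a :: as, j => phiI A a j * phiL A as j
end

/-- the elementary weight `Φ(τ) = Σᵢ bᵢ Φᵢ(τ₁)⋯Φᵢ(τₙ)` of a Runge–Kutta scheme -/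
def Phi {s : ℕ} (A : Fin s → Fin s → ℝ) (b : Fin s → ℝ) : PT → ℝ
  | .node l => ∑ i, b i * phiL A l i

end PT

/-! In an explicit three-stage tableau `c₁ = 0`, so every term containing `c₁` drops out and each
order condition collapses to one or two monomials in `a₂₁, a₃₁, a₃₂` and the weights. With
`b₂ = 0` the odd powers of `c₂ = -√3/4` never appear, and only `√3 ^ 2 = 3` is needed. -/

section ExplicitThreeStage

variable {R : Type*} [CommSemiring R] (a₂₁ a₃₁ a₃₂ b₁ b₂ b₃ : R) {k : ℕ}

def explicitTableau3 : Fin 3 → Fin 3 → R :=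
  ![![0, 0, 0], ![a₂₁, 0, 0], ![a₃₁, a₃₂, 0]]

theorem explicitTableau3_rowSum (i : Fin 3) :
    ∑ j, explicitTableau3 a₂₁ a₃₁ a₃₂ i j = ![0, a₂₁, a₃₁ + a₃₂] i := by
  fin_cases i <;> simp [explicitTableau3, Fin.sum_univ_three]

theorem explicitTableau3_sum_mul_node_pow (hk : k ≠ 0) :
    ∑ i, ![b₁, b₂, b₃] i * (∑ j, explicitTableau3 a₂₁ a₃₁ a₃₂ i j) ^ k =
      b₂ * a₂₁ ^ k + b₃ * (a₃₁ + a₃₂) ^ k := by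
  simp only [explicitTableau3_rowSum]
  simp [Fin.sum_univ_three, hk]

theorem explicitTableau3_sum_mul_mul_node_pow (hk : k ≠ 0) :
    ∑ i, ∑ j, ![b₁, b₂, b₃] i * explicitTableau3 a₂₁ a₃₁ a₃₂ i j *
        (∑ l, explicitTableau3 a₂₁ a₃₁ a₃₂ j l) ^ k =
      b₃ * a₃₂ * a₂₁ ^ k := by
  simp [explicitTableau3, Fin.sum_univ_three, hk]

end ExplicitThreeStage

/-- The three-stage explicit tableau with `a₂₁ = −√3/4`, `a₃₂ = 3/4`,
`b = (11/27, 0, 16/27)`, `c = (0, −√3/4, 3/4)` satisfies the fourth-order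
conditions restricted to trees with no `•[•]` descendant. -/
theorem three_stage_fourth_order :
    let A : Fin 3 → Fin 3 → ℝ :=
      ![![0, 0, 0], ![-(Real.sqrt 3) / 4, 0, 0], ![0, 3 / 4, 0]]
    let b : Fin 3 → ℝ := ![11 / 27, 0, 16 / 27]
    let c : Fin 3 → ℝ := fun i => ∑ j, A i j
    (∀ i, c i = ![0, -(Real.sqrt 3) / 4, 3 / 4] i) ∧
    (∑ i, b i) = 1 ∧
    (∑ i, b i * c i ^ 2) = 1 / 3 ∧
    (∑ i, b i * c i ^ 3) = 1 / 4 ∧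
    (∑ i, ∑ j, b i * A i j * c j ^ 2) = 1 / 12 := by
  intro A b c
  have hc : c = ![0, -(Real.sqrt 3) / 4, 3 / 4] :=
    funext fun i => (explicitTableau3_rowSum _ 0 _ i).trans (by rw [zero_add])
  refine ⟨congrFun hc, ?_, ?_, ?_, ?_⟩
  · norm_num [b, Fin.sum_univ_three, Matrix.cons_val_two]
  · exact (explicitTableau3_sum_mul_node_pow _ 0 _ _ _ _ two_ne_zero).trans (by norm_num)
  · exact (explicitTableau3_sum_mul_node_pow _ 0 _ _ _ _ three_ne_zero).trans (by norm_num)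
  · refine (explicitTableau3_sum_mul_mul_node_pow _ 0 _ _ _ _ two_ne_zero).trans ?_
    rw [neg_div, neg_sq, div_pow, Real.sq_sqrt (by norm_num)]
    norm_num
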